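/- arXiv:2210.00960 — 2 statements merged into one kernel-verified Lean document; each statement's English description precedes it below -/
import Mathlib

section
/- Let E be a real Hilbert space and let h : E → ℝ be differentiable, convex, and η-approximately β-gradient Lipschitz, i.e. ‖∇h(θ1) − ∇h(θ2)‖ ≤ β‖θ1 − θ2‖ + η for all θ1, θ2, with β > 0, η > 0. Then for all θ1, θ2, ⟪∇h(θ1) − ∇h(θ2), θ1 − θ2⟫ ≥ (1/β)·(max(‖∇h(θ1) − ∇h(θ2)‖ − η, 0))². -/
/-!
Convexity bounds `h z` from below by its tangent at `θ₂`, and integrating the gradient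
estimate along a segment gives the approximate descent lemma
`h z ≤ h θ₁ + ⟪∇h θ₁, z - θ₁⟫ + β/2 ‖z - θ₁‖² + η ‖z - θ₁‖`. Together they bound the Bregman
divergence `D(θ₁, θ₂)` below by `⟪∇h θ₂ - ∇h θ₁, v⟫ - β/2 ‖v‖² - η ‖v‖` for every `v = z - θ₁`,
and the supremum over `v` is `max (‖∇h θ₁ - ∇h θ₂‖ - η) 0 ^ 2 / (2β)`, attained along
`∇h θ₂ - ∇h θ₁`. The claim follows since `⟪∇h θ₁ - ∇h θ₂, θ₁ - θ₂⟫ = D(θ₁, θ₂) + D(θ₂, θ₁)`.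
-/

open RealInnerProductSpace Set

theorem sub_le_of_hasDerivAt_le_affine {f f' : ℝ → ℝ} {a b : ℝ}
    (hf : ∀ t, HasDerivAt f (f' t) t) (hle : ∀ t ∈ Ico (0 : ℝ) 1, f' t ≤ a * t + b) :
    f 1 - f 0 ≤ a / 2 + b := by
  have hB (t : ℝ) : HasDerivAt (fun s => f 0 + a / 2 * s ^ 2 + b * s) (a * t + b) t := by
    refine ((((hasDerivAt_pow 2 t).const_mul (a / 2)).const_add (f 0)).add
      ((hasDerivAt_id' t).const_mul b)).congr_deriv ?_
    push_cast; ring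
  have := image_le_of_deriv_right_le_deriv_boundary (a := 0) (b := 1) (f := f) (f' := f')
    (B := fun s => f 0 + a / 2 * s ^ 2 + b * s)
    (fun t _ => (hf t).continuousAt.continuousWithinAt)
    (fun t _ => (hf t).hasDerivWithinAt) (by simp)
    (fun t _ => (hB t).continuousAt.continuousWithinAt)
    (fun t _ => (hB t).hasDerivWithinAt) hle (right_mem_Icc.2 zero_le_one)
  simp only [one_pow, mul_one] at this
  linarith

section

variable {E : Type*} [NormedAddCommGroup E] [InnerProductSpace ℝ E]

theorem exists_sq_div_le_inner_sub_sq_sub_norm {β η : ℝ} (hβ : 0 < β) (hη : 0 ≤ η) (w : E) :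
    ∃ v : E, max (‖w‖ - η) 0 ^ 2 / (2 * β) ≤ ⟪w, v⟫ - β / 2 * ‖v‖ ^ 2 - η * ‖v‖ := by
  rcases le_or_gt ‖w‖ η with hw | hw
  · exact ⟨0, by simp [max_eq_right (sub_nonpos.2 hw)]⟩
  · have hw0 : 0 < ‖w‖ := hη.trans_lt hw
    refine ⟨((‖w‖ - η) / (β * ‖w‖)) • w, le_of_eq ?_⟩
    rw [max_eq_left (sub_nonneg.2 hw.le), real_inner_smul_right, real_inner_self_eq_norm_sq,
      norm_smul, Real.norm_of_nonneg (div_nonneg (sub_nonneg.2 hw.le) (by positivity))]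
    field_simp
    ring

def bregmanDiv (h : E → ℝ) (g : E → E) (x y : E) : ℝ := h x - h y - ⟪g y, x - y⟫

theorem bregmanDiv_add_bregmanDiv_swap (h : E → ℝ) (g : E → E) (x y : E) :
    bregmanDiv h g x y + bregmanDiv h g y x = ⟪g x - g y, x - y⟫ := by
  simp only [bregmanDiv, inner_sub_left, inner_sub_right, real_inner_comm]
  ring

variable [CompleteSpace E]

theorem HasGradientAt.hasDerivAt_comp_add_smul {h : E → ℝ} {g' x v : E} {t : ℝ}
    (hh : HasGradientAt h g' (x + t • v)) :
    HasDerivAt (fun s : ℝ => h (x + s • v)) ⟪g', v⟫ t := by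
  have hline : HasDerivAt (fun s : ℝ => x + s • v) v t := by
    simpa using ((hasDerivAt_id t).smul_const v).const_add x
  simpa [InnerProductSpace.toDual_apply_apply, Function.comp_def] using
    hh.hasFDerivAt.comp_hasDerivAt t hline

theorem ConvexOn.add_inner_sub_le_of_hasGradientAt {h : E → ℝ} {s : Set E} {g' x y : E}
    (hconv : ConvexOn ℝ s h) (hx : x ∈ s) (hy : y ∈ s) (hg : HasGradientAt h g' x) :
    h x + ⟪g', y - x⟫ ≤ h y := by
  have hline : ConvexOn ℝ (AffineMap.lineMap x y ⁻¹' s) (fun t : ℝ => h (x + t • (y - x))) := by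
    refine (hconv.comp_affineMap (AffineMap.lineMap x y)).congr fun t _ => ?_
    simp [AffineMap.lineMap_apply, add_comm]
  have hd : HasDerivAt (fun t : ℝ => h (x + t • (y - x))) ⟪g', y - x⟫ 0 :=
    HasGradientAt.hasDerivAt_comp_add_smul (by simpa using hg)
  have := hline.le_slope_of_hasDerivAt (by simpa using hx) (by simpa using hy) one_pos hd
  simp only [slope_def_field, one_smul, add_sub_cancel, zero_smul, add_zero, sub_zero, div_one]
    at this
  linarith

theorem le_add_inner_add_sq_add_norm {h : E → ℝ} {g : E → E} {β η : ℝ}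
    (hgrad : ∀ θ, HasGradientAt h (g θ) θ)
    (happrox : ∀ θ1 θ2 : E, ‖g θ1 - g θ2‖ ≤ β * ‖θ1 - θ2‖ + η) (x y : E) :
    h y ≤ h x + ⟪g x, y - x⟫ + β / 2 * ‖y - x‖ ^ 2 + η * ‖y - x‖ := by
  set v := y - x
  have hderiv (t : ℝ) : HasDerivAt (fun s : ℝ => h (x + s • v) - s * ⟪g x, v⟫)
      (⟪g (x + t • v) - g x, v⟫) t := by
    rw [inner_sub_left]
    exact (hgrad _).hasDerivAt_comp_add_smul.sub (by simpa using (hasDerivAt_id t).mul_const _)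
  have hbound : ∀ t ∈ Ico (0 : ℝ) 1, ⟪g (x + t • v) - g x, v⟫ ≤ β * ‖v‖ ^ 2 * t + η * ‖v‖ := by
    intro t ht
    calc ⟪g (x + t • v) - g x, v⟫ ≤ ‖g (x + t • v) - g x‖ * ‖v‖ := real_inner_le_norm _ _
      _ ≤ (β * (t * ‖v‖) + η) * ‖v‖ := by
        gcongr
        simpa [norm_smul, abs_of_nonneg ht.1] using happrox (x + t • v) x
      _ = β * ‖v‖ ^ 2 * t + η * ‖v‖ := by ring
  have := sub_le_of_hasDerivAt_le_affine hderiv hbound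
  simp only [v, one_smul, add_sub_cancel, one_mul, zero_smul, add_zero, zero_mul, sub_zero] at this
  linarith

theorem sq_div_le_bregmanDiv {h : E → ℝ} {g : E → E} {β η : ℝ} (hβ : 0 < β) (hη : 0 ≤ η)
    (hconv : ConvexOn ℝ univ h) (hgrad : ∀ θ, HasGradientAt h (g θ) θ)
    (happrox : ∀ θ1 θ2 : E, ‖g θ1 - g θ2‖ ≤ β * ‖θ1 - θ2‖ + η) (x y : E) :
    max (‖g x - g y‖ - η) 0 ^ 2 / (2 * β) ≤ bregmanDiv h g x y := by
  obtain ⟨v, hv⟩ := exists_sq_div_le_inner_sub_sq_sub_norm hβ hη (g y - g x)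
  rw [norm_sub_rev] at hv
  have hlower := hconv.add_inner_sub_le_of_hasGradientAt (mem_univ y) (mem_univ (x + v)) (hgrad y)
  have hupper := le_add_inner_add_sq_add_norm hgrad happrox x (x + v)
  rw [show x + v - y = (x - y) + v by abel, inner_add_right] at hlower
  rw [add_sub_cancel_left] at hupper
  rw [inner_sub_left] at hv
  unfold bregmanDiv
  linarith

end

/-- Lemma 4.2(ii) (η-approximate co-coercivity): for a convex, differentiable,
η-approximately β-gradient Lipschitz function `h`,
`⟪∇h(θ1) - ∇h(θ2), θ1 - θ2⟫ ≥ (1/β)·(max(‖∇h(θ1) - ∇h(θ2)‖ - η, 0))²`. -/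
theorem approx_cocoercive
    {E : Type*} [NormedAddCommGroup E] [InnerProductSpace ℝ E] [CompleteSpace E]
    (h : E → ℝ) (g : E → E) (β η : ℝ) (hβ : 0 < β) (hη : 0 < η)
    (hconv : ConvexOn ℝ Set.univ h)
    (hgrad : ∀ θ : E, HasGradientAt h (g θ) θ)
    (happrox : ∀ θ1 θ2 : E, ‖g θ1 - g θ2‖ ≤ β * ‖θ1 - θ2‖ + η) :
    ∀ θ1 θ2 : E,
      ⟪g θ1 - g θ2, θ1 - θ2⟫ ≥ 1 / β * (max (‖g θ1 - g θ2‖ - η) 0) ^ 2 := by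
  intro θ1 θ2
  have h12 := sq_div_le_bregmanDiv hβ hη.le hconv hgrad happrox θ1 θ2
  have h21 := sq_div_le_bregmanDiv hβ hη.le hconv hgrad happrox θ2 θ1
  rw [norm_sub_rev] at h21
  set m := max (‖g θ1 - g θ2‖ - η) 0
  calc 1 / β * m ^ 2 = m ^ 2 / (2 * β) + m ^ 2 / (2 * β) := by ring
    _ ≤ bregmanDiv h g θ1 θ2 + bregmanDiv h g θ2 θ1 := add_le_add h12 h21
    _ = ⟪g θ1 - g θ2, θ1 - θ2⟫ := bregmanDiv_add_bregmanDiv_swap h g θ1 θ2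
end

section
/- Let E be a real Hilbert space, Z a set, and h : E × Z → ℝ such that for every z ∈ Z the map θ ↦ h(θ,z) is convex, L-Lipschitz, differentiable, and η-approximately β-gradient Lipschitz. Let S, S' ∈ Zⁿ differ in exactly one coordinate, let step sizes satisfy 0 < α_t ≤ 1/β, and for each index sequence i ∈ (Fin n)^T define SGD trajectories θ_S^t(i), θ_{S'}^t(i) as θ^{t+1} = θ^t − α_{t+1}∇_θ h(θ^t, ·) on the sample with index i_{t+1}, both from a common initialization. Let θ̄_S(i) = (1/T)∑_{t=1}^T θ_S^t(i) and θ̄_{S'}(i) = (1/T)∑_{t=1}^T θ_{S'}^t(i) be the stochastic-weight-averaged iterates. Then n^{−T} ∑_{i ∈ (Fin n)^T} ‖θ̄_S(i) − θ̄_{S'}(i)‖ ≤ (η + 2L/n) ∑_{t=1}^T α_t (T − t + 1)/T; in particular for constant step size α this bound equals (η + 2L/n)·α(T+1)/2, roughly half of the bound (η + 2L/n)∑α_t for the last iterate. -/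
/-!
A step on a sample shared by `S` and `S'` is almost non-expansive. Convexity and the
`η`-approximate `β`-Lipschitz gradient give the co-coercivity bound
`(‖∇f x - ∇f y‖ - η)² / (2β) ≤ ⟪∇f x - ∇f y, x - y⟫`, so for `α ≤ 1/β` the gradient step
increases the distance between the two iterates by at most `αη`. The step on the differing
sample, which a uniformly random index picks with probability `1/n`, adds at most `2αL`.
Hence the expected distance at time `t` is at most `(η + 2L/n) ∑_{s ≤ t} α_s`, and averaging
over `t = 1, …, T` counts each `α_s` exactly `T - s + 1` times.
-/

open RealInnerProductSpace Finset
open scoped BigOperators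

def ApproxLipschitzWith {E F : Type*} [SeminormedAddCommGroup E] [SeminormedAddCommGroup F]
    (β η : ℝ) (g : E → F) : Prop :=
  ∀ x y, ‖g x - g y‖ ≤ β * ‖x - y‖ + η

lemma ApproxLipschitzWith.nonneg {E F : Type*} [SeminormedAddCommGroup E]
    [SeminormedAddCommGroup F] {β η : ℝ} {g : E → F} (hg : ApproxLipschitzWith β η g) :
    0 ≤ η := by
  simpa using hg 0 0

section InnerProductSpace

variable {E : Type*} [NormedAddCommGroup E] [InnerProductSpace ℝ E] [CompleteSpace E]
  {f : E → ℝ} {D : E → E} {β η : ℝ}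

lemma HasGradientAt.hasDerivAt_add_smul {g x v : E} {t : ℝ}
    (hf : HasGradientAt f g (x + t • v)) :
    HasDerivAt (fun s : ℝ => f (x + s • v)) ⟪g, v⟫ t := by
  have hpath : HasDerivAt (fun s : ℝ => x + s • v) v t := by
    simpa using ((hasDerivAt_id t).smul_const v).const_add x
  have h := hf.hasFDerivAt.comp_hasDerivAt t hpath
  simp only [InnerProductSpace.toDual_apply_apply] at h
  exact h

lemma HasGradientAt.norm_le_of_lipschitz {g x : E} {L : ℝ} (hf : HasGradientAt f g x)
    (hL : 0 ≤ L) (hlip : ∀ a b, |f a - f b| ≤ L * ‖a - b‖) : ‖g‖ ≤ L := by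
  have hK : LipschitzWith (Real.toNNReal L) f :=
    LipschitzWith.of_dist_le' fun a b => by simpa [Real.dist_eq, dist_eq_norm] using hlip a b
  simpa [Real.coe_toNNReal L hL] using hf.hasFDerivAt.le_of_lipschitz hK

lemma ConvexOn.add_inner_le_of_hasGradientAt {s : Set E} {g x y : E} (hconv : ConvexOn ℝ s f)
    (hx : x ∈ s) (hy : y ∈ s) (hf : HasGradientAt f g x) : f x + ⟪g, y - x⟫ ≤ f y := by
  have hline :
      ConvexOn ℝ (AffineMap.lineMap x y ⁻¹' s) (fun t : ℝ => f (x + t • (y - x))) := by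
    have hcomp : (fun t : ℝ => f (x + t • (y - x))) = f ∘ AffineMap.lineMap x y := by
      funext t
      simp [AffineMap.lineMap_apply, add_comm]
    exact hcomp ▸ hconv.comp_affineMap (AffineMap.lineMap x y)
  have hslope := hline.le_slope_of_hasDerivAt (x := 0) (y := 1) (by simpa) (by simpa)
    zero_lt_one (HasGradientAt.hasDerivAt_add_smul (by simpa using hf))
  simp only [slope_def_field, one_smul, add_sub_cancel, zero_smul, add_zero, sub_zero, div_one]
    at hslope
  linarith

lemma ApproxLipschitzWith.apply_add_le (hD : ApproxLipschitzWith β η D)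
    (hf : ∀ z, HasGradientAt f (D z) z) (y v : E) :
    f (y + v) ≤ f y + ⟪D y, v⟫ + η * ‖v‖ + β / 2 * ‖v‖ ^ 2 := by
  set ψ : ℝ → ℝ := fun t =>
    f (y + t • v) - t * ⟪D y, v⟫ - t * (η * ‖v‖) - t ^ 2 * (β / 2 * ‖v‖ ^ 2)
  have hψ (t : ℝ) :
      HasDerivAt ψ (⟪D (y + t • v) - D y, v⟫ - η * ‖v‖ - t * (β * ‖v‖ ^ 2)) t := by
    have h := (((hf (y + t • v)).hasDerivAt_add_smul.sub
      ((hasDerivAt_id t).mul_const ⟪D y, v⟫)).sub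
      ((hasDerivAt_id t).mul_const (η * ‖v‖))).sub
      ((hasDerivAt_pow 2 t).mul_const (β / 2 * ‖v‖ ^ 2))
    exact h.congr_deriv (by simp only [inner_sub_left]; ring)
  have hψ' : ∀ t ∈ interior (Set.Icc (0 : ℝ) 1),
      ⟪D (y + t • v) - D y, v⟫ - η * ‖v‖ - t * (β * ‖v‖ ^ 2) ≤ 0 := by
    intro t ht
    rw [interior_Icc] at ht
    have hgrad : ‖D (y + t • v) - D y‖ ≤ β * (t * ‖v‖) + η := by
      simpa [norm_smul, abs_of_pos ht.1] using hD (y + t • v) y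
    have := real_inner_le_norm (D (y + t • v) - D y) v
    nlinarith [norm_nonneg v]
  have hanti : AntitoneOn ψ (Set.Icc 0 1) :=
    antitoneOn_of_hasDerivWithinAt_nonpos (convex_Icc 0 1)
      (HasDerivAt.continuousOn fun t _ => hψ t) (fun t _ => (hψ t).hasDerivWithinAt) hψ'
  have h₀₁ : ψ 1 ≤ ψ 0 := hanti (by simp) (by simp) zero_le_one
  simp only [ψ, one_smul, one_mul, one_pow, zero_smul, add_zero, zero_mul, sub_zero, ne_eq,
    OfNat.ofNat_ne_zero, not_false_eq_true, zero_pow] at h₀₁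
  linarith

lemma ConvexOn.add_inner_add_sq_div_le (hconv : ConvexOn ℝ Set.univ f)
    (hf : ∀ z, HasGradientAt f (D z) z) (hD : ApproxLipschitzWith β η D) (hβ : 0 < β)
    {x y : E} (hxy : η < ‖D y - D x‖) :
    f x + ⟪D x, y - x⟫ + (‖D y - D x‖ - η) ^ 2 / (2 * β) ≤ f y := by
  set u := D y - D x
  set U := ‖u‖
  have hU : 0 < U := hD.nonneg.trans_lt hxy
  set r := (U - η) / β
  have hr : 0 ≤ r := div_nonneg (by linarith) hβ.le
  -- the descent-lemma step against `u` whose length `r` maximises the gain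
  set v := -(r / U) • u
  have hv : ‖v‖ = r := by
    rw [norm_smul, norm_neg, Real.norm_of_nonneg (div_nonneg hr hU.le), div_mul_cancel₀ _ hU.ne']
  have huv : ⟪D y, v⟫ - ⟪D x, v⟫ = -(r * U) := by
    rw [← inner_sub_left, real_inner_smul_right, real_inner_self_eq_norm_sq]
    change -(r / U) * U ^ 2 = _
    field_simp
  have hdesc := hD.apply_add_le hf y v
  have hfo :=
    hconv.add_inner_le_of_hasGradientAt (Set.mem_univ x) (Set.mem_univ (y + v)) (hf x)
  rw [add_sub_right_comm, inner_add_right] at hfo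
  rw [hv] at hdesc
  have hval : r * U - η * r - β / 2 * r ^ 2 = (U - η) ^ 2 / (2 * β) := by
    simp only [r]; field_simp; ring
  linarith

lemma ConvexOn.sq_div_le_inner (hconv : ConvexOn ℝ Set.univ f)
    (hf : ∀ z, HasGradientAt f (D z) z) (hD : ApproxLipschitzWith β η D) (hβ : 0 < β)
    {x y : E} (hxy : η < ‖D x - D y‖) :
    (‖D x - D y‖ - η) ^ 2 / (2 * β) ≤ ⟪D x - D y, x - y⟫ := by
  rw [← norm_neg, neg_sub] at hxy
  have h₁ := hconv.add_inner_add_sq_div_le hf hD hβ hxy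
  have h₂ := hconv.add_inner_le_of_hasGradientAt (Set.mem_univ y) (Set.mem_univ x) (hf y)
  rw [← norm_neg, neg_sub] at h₁
  have : ⟪D x - D y, x - y⟫ = -⟪D x, y - x⟫ - ⟪D y, x - y⟫ := by
    rw [← neg_sub x y, inner_neg_right, inner_sub_left]; ring
  linarith

lemma ConvexOn.inner_sub_nonneg (hconv : ConvexOn ℝ Set.univ f)
    (hf : ∀ z, HasGradientAt f (D z) z) (x y : E) : 0 ≤ ⟪D x - D y, x - y⟫ := by
  have h₁ := hconv.add_inner_le_of_hasGradientAt (Set.mem_univ x) (Set.mem_univ y) (hf x)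
  have h₂ := hconv.add_inner_le_of_hasGradientAt (Set.mem_univ y) (Set.mem_univ x) (hf y)
  have : ⟪D x - D y, x - y⟫ = -⟪D x, y - x⟫ - ⟪D y, x - y⟫ := by
    rw [← neg_sub x y, inner_neg_right, inner_sub_left]; ring
  linarith

lemma ConvexOn.norm_sub_smul_sub_le (hconv : ConvexOn ℝ Set.univ f)
    (hf : ∀ z, HasGradientAt f (D z) z) (hD : ApproxLipschitzWith β η D) (hβ : 0 < β)
    {a : ℝ} (ha₀ : 0 ≤ a) (ha : a ≤ 1 / β) (x y : E) :
    ‖(x - a • D x) - (y - a • D y)‖ ≤ ‖x - y‖ + a * η := by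
  set g := D x - D y
  set d := x - y
  have hη := hD.nonneg
  have hsq : ‖d - a • g‖ ^ 2 = ‖d‖ ^ 2 - 2 * a * ⟪g, d⟫ + a ^ 2 * ‖g‖ ^ 2 := by
    rw [norm_sub_sq_real, real_inner_smul_right, norm_smul, Real.norm_of_nonneg ha₀,
      real_inner_comm]
    ring
  have hP := hconv.inner_sub_nonneg hf x y
  suffices a ^ 2 * ‖g‖ ^ 2 ≤ 2 * a * ⟪g, d⟫ + 2 * a * η * ‖d‖ + a ^ 2 * η ^ 2 by
    rw [show x - a • D x - (y - a • D y) = d - a • g by simp only [d, g, smul_sub]; abel]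
    refine (pow_le_pow_iff_left₀ (norm_nonneg _) (by positivity) two_ne_zero).mp ?_
    rw [hsq]
    nlinarith
  rcases le_or_gt ‖g‖ η with hg | hg
  · have : ‖g‖ ^ 2 ≤ η ^ 2 := pow_le_pow_left₀ (norm_nonneg _) hg 2
    nlinarith [mul_nonneg ha₀ hP, mul_nonneg (mul_nonneg ha₀ hη) (norm_nonneg d)]
  · have haβ : a * β ≤ 1 := by rwa [le_div_iff₀ hβ] at ha
    have hco := hconv.sq_div_le_inner hf hD hβ hg
    have h₁ : a * (‖g‖ - η) ^ 2 ≤ 2 * ⟪g, d⟫ := by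
      calc a * (‖g‖ - η) ^ 2 ≤ (‖g‖ - η) ^ 2 / β := by
            rw [le_div_iff₀ hβ]; nlinarith [sq_nonneg (‖g‖ - η)]
        _ ≤ 2 * ⟪g, d⟫ := by
            rw [div_le_iff₀ hβ]; rw [div_le_iff₀ (by positivity)] at hco; linarith
    have h₂ : a * (‖g‖ - η) ≤ ‖d‖ := by
      have := hD x y
      nlinarith [norm_nonneg d]
    nlinarith [mul_le_mul_of_nonneg_left h₁ ha₀, mul_le_mul_of_nonneg_left h₂
      (mul_nonneg ha₀ hη)]

end InnerProductSpace

lemma norm_sub_smul_sub_sub_smul_le {E : Type*} [SeminormedAddCommGroup E] [NormedSpace ℝ E]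
    {a L : ℝ} (ha : 0 ≤ a) {g g' : E} (hg : ‖g‖ ≤ L) (hg' : ‖g'‖ ≤ L) (x y : E) :
    ‖(x - a • g) - (y - a • g')‖ ≤ ‖x - y‖ + a * (2 * L) := by
  rw [show x - a • g - (y - a • g') = (x - y) - (a • g - a • g') by abel]
  calc ‖(x - y) - (a • g - a • g')‖ ≤ ‖x - y‖ + (‖a • g‖ + ‖a • g'‖) :=
        (norm_sub_le _ _).trans (by gcongr; exact norm_sub_le _ _)
    _ ≤ ‖x - y‖ + a * (2 * L) := by
        rw [norm_smul, norm_smul, Real.norm_of_nonneg ha]; nlinarith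

lemma expect_ite_apply_eq {ι κ : Type*} [Fintype ι] [DecidableEq ι] [Fintype κ] [DecidableEq κ]
    (t : ι) (j : κ) (c : ℝ) :
    𝔼 i : ι → κ, (if i t = j then c else 0) = c / Fintype.card κ := by
  have hι : 0 < Fintype.card ι := Fintype.card_pos_iff.mpr ⟨t⟩
  have hκ : (0 : ℝ) < Fintype.card κ := by exact_mod_cast Fintype.card_pos_iff.mpr ⟨j⟩
  have hsum := Fintype.sum_piFinset_apply (fun b : κ => if b = j then c else 0) univ t
  rw [Fintype.piFinset_univ, sum_ite_eq' univ j] at hsum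
  rw [Fintype.expect_eq_sum_div_card, hsum, Fintype.card_fun, if_pos (mem_univ j), card_univ,
    nsmul_eq_mul]
  have hpow : (Fintype.card κ : ℝ) ^ Fintype.card ι
      = Fintype.card κ ^ (Fintype.card ι - 1) * Fintype.card κ := by
    rw [← pow_succ, Nat.sub_add_cancel hι]
  push_cast
  rw [hpow]
  field_simp

lemma expect_le_sum_Icc_of_le_add {κ : Type*} [Fintype κ] [DecidableEq κ] {T : ℕ} (j : κ)
    (δ : (Fin T → κ) → ℕ → ℝ) (α : ℕ → ℝ) (b c : ℝ) (h₀ : ∀ i, δ i 0 = 0)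
    (hstep : ∀ i (t : Fin T), δ i (t + 1) ≤ δ i t + α (t + 1) * (b + if i t = j then c else 0)) :
    ∀ t ≤ T, 𝔼 i, δ i t ≤ ∑ s ∈ Icc 1 t, (b + c / Fintype.card κ) * α s := by
  have : Nonempty κ := ⟨j⟩
  intro t ht
  induction t with
  | zero => simp [h₀]
  | succ t ih =>
    have hmean : 𝔼 i, δ i (t + 1) ≤ 𝔼 i, δ i t + α (t + 1) * (b + c / Fintype.card κ) := by
      calc 𝔼 i, δ i (t + 1)
          ≤ 𝔼 i, (δ i t + α (t + 1) * (b + if i ⟨t, ht⟩ = j then c else 0)) :=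
            expect_le_expect fun i _ => hstep i ⟨t, ht⟩
        _ = 𝔼 i, δ i t + α (t + 1) * (b + c / Fintype.card κ) := by
            rw [expect_add_distrib, ← mul_expect, expect_add_distrib, Fintype.expect_const,
              expect_ite_apply_eq]
    rw [sum_Icc_succ_top (by omega)]
    linarith [ih (by omega)]

lemma norm_smul_sum_sub_smul_sum_le {𝕜 E ι : Type*} [NormedField 𝕜] [SeminormedAddCommGroup E]
    [NormedSpace 𝕜 E] (c : 𝕜) (s : Finset ι) (x y : ι → E) :
    ‖c • ∑ t ∈ s, x t - c • ∑ t ∈ s, y t‖ ≤ ‖c‖ * ∑ t ∈ s, ‖x t - y t‖ := by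
  rw [← smul_sub, ← sum_sub_distrib, norm_smul]
  exact mul_le_mul_of_nonneg_left (norm_sum_le _ _) (norm_nonneg c)

lemma sum_Icc_sum_Icc_eq_sum_mul {R : Type*} [Ring R] (T : ℕ) (f : ℕ → R) :
    ∑ t ∈ Icc 1 T, ∑ s ∈ Icc 1 t, f s = ∑ s ∈ Icc 1 T, f s * ((T : R) - s + 1) := by
  rw [sum_comm' (t' := Icc 1 T) (s' := fun s => Icc s T) (fun t s => by
    simp only [mem_Icc]; omega)]
  refine sum_congr rfl fun s hs => ?_
  rw [sum_const, Nat.card_Icc, nsmul_eq_mul', Nat.cast_sub ((mem_Icc.mp hs).2.trans T.le_succ)]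
  push_cast
  rw [add_sub_right_comm]

lemma expect_norm_swa_sub_le {E ι : Type*} [SeminormedAddCommGroup E] [NormedSpace ℝ E]
    [Fintype ι] {T : ℕ} (x y : ι → ℕ → E) (B : ℕ → ℝ)
    (hB : ∀ t ∈ Icc 1 T, 𝔼 i, ‖x i t - y i t‖ ≤ B t) :
    𝔼 i, ‖(T : ℝ)⁻¹ • ∑ t ∈ Icc 1 T, x i t - (T : ℝ)⁻¹ • ∑ t ∈ Icc 1 T, y i t‖
      ≤ (T : ℝ)⁻¹ * ∑ t ∈ Icc 1 T, B t :=
  calc 𝔼 i, ‖(T : ℝ)⁻¹ • ∑ t ∈ Icc 1 T, x i t - (T : ℝ)⁻¹ • ∑ t ∈ Icc 1 T, y i t‖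
      ≤ 𝔼 i, (T : ℝ)⁻¹ * ∑ t ∈ Icc 1 T, ‖x i t - y i t‖ := expect_le_expect fun i _ => by
        simpa using norm_smul_sum_sub_smul_sum_le (T : ℝ)⁻¹ (Icc 1 T) (x i) (y i)
    _ = (T : ℝ)⁻¹ * ∑ t ∈ Icc 1 T, 𝔼 i, ‖x i t - y i t‖ := by rw [← mul_expect, expect_sum_comm]
    _ ≤ (T : ℝ)⁻¹ * ∑ t ∈ Icc 1 T, B t := by gcongr with t ht; exact hB t ht

lemma sum_Icc_sub_add_one (T : ℕ) : ∑ t ∈ Icc 1 T, ((T : ℝ) - t + 1) = T * (T + 1) / 2 := by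
  have hrev := sum_Icc_sum_Icc_eq_sum_mul T fun _ => (1 : ℝ)
  simp only [sum_const, Nat.card_Icc, add_tsub_cancel_right, nsmul_eq_mul, mul_one, one_mul]
    at hrev
  have htotal : ∑ t ∈ Icc 1 T, (((T : ℝ) - t + 1) + t) = T * (T + 1) := by
    rw [sum_congr rfl fun (t : ℕ) _ => show ((T : ℝ) - t + 1) + t = T + 1 by ring]
    simp [mul_add]
  rw [sum_add_distrib, ← hrev] at htotal
  linarith

lemma sum_Icc_mul_sub_add_one_div_of_const {T : ℕ} (hT : 0 < T) {α : ℕ → ℝ} {α0 : ℝ}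
    (hα : ∀ t, 1 ≤ t → t ≤ T → α t = α0) :
    ∑ t ∈ Icc 1 T, α t * ((T : ℝ) - t + 1) / T = α0 * (T + 1) / 2 := by
  have hT₀ : (T : ℝ) ≠ 0 := Nat.cast_ne_zero.mpr hT.ne'
  have hconst : ∑ t ∈ Icc 1 T, α t * ((T : ℝ) - t + 1) / T
      = α0 / T * ∑ t ∈ Icc 1 T, ((T : ℝ) - t + 1) := by
    rw [mul_sum]
    refine sum_congr rfl fun t ht => ?_
    rw [hα t (mem_Icc.mp ht).1 (mem_Icc.mp ht).2]
    ring
  rw [hconst, sum_Icc_sub_add_one]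
  field_simp

theorem swa_uniform_stability_general
    {E : Type*} [NormedAddCommGroup E] [InnerProductSpace ℝ E] [CompleteSpace E]
    {Z : Type*}
    (h : E → Z → ℝ) (D : E → Z → E) (L β η : ℝ) (hL : 0 ≤ L) (hβ : 0 < β)
    (hconv : ∀ z : Z, ConvexOn ℝ Set.univ (fun θ => h θ z))
    (hLip : ∀ (z : Z) (θ1 θ2 : E), |h θ1 z - h θ2 z| ≤ L * ‖θ1 - θ2‖)
    (hgrad : ∀ (z : Z) (θ : E), HasGradientAt (fun θ' => h θ' z) (D θ z) θ)
    (happrox : ∀ (z : Z) (θ1 θ2 : E), ‖D θ1 z - D θ2 z‖ ≤ β * ‖θ1 - θ2‖ + η)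
    (n T : ℕ) (hT : 0 < T)
    (S S' : Fin n → Z)
    (hdiff : ∃ j : Fin n, S j ≠ S' j ∧ ∀ i : Fin n, i ≠ j → S i = S' i)
    (θ0 : E) (α : ℕ → ℝ)
    (hα : ∀ t : ℕ, 1 ≤ t → t ≤ T → 0 < α t ∧ α t ≤ 1 / β)
    (θS θS' : (Fin T → Fin n) → ℕ → E)
    (hinitS : ∀ i, θS i 0 = θ0) (hinitS' : ∀ i, θS' i 0 = θ0)
    (hstepS : ∀ (i : Fin T → Fin n) (t : Fin T),
      θS i (t.val + 1) = θS i t.val - α (t.val + 1) • D (θS i t.val) (S (i t)))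
    (hstepS' : ∀ (i : Fin T → Fin n) (t : Fin T),
      θS' i (t.val + 1) = θS' i t.val - α (t.val + 1) • D (θS' i t.val) (S' (i t)))
    -- the stochastic-weight-averaged iterates
    (θbarS θbarS' : (Fin T → Fin n) → E)
    (hbarS : ∀ i, θbarS i = (T : ℝ)⁻¹ • ∑ t ∈ Finset.Icc 1 T, θS i t)
    (hbarS' : ∀ i, θbarS' i = (T : ℝ)⁻¹ • ∑ t ∈ Finset.Icc 1 T, θS' i t) :
    (1 / (n : ℝ) ^ T) * ∑ i : Fin T → Fin n, ‖θbarS i - θbarS' i‖ ≤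
        (η + 2 * L / n) * ∑ t ∈ Finset.Icc 1 T, α t * ((T : ℝ) - t + 1) / T ∧
    ∀ α0 : ℝ, (∀ t : ℕ, 1 ≤ t → t ≤ T → α t = α0) →
      (η + 2 * L / n) * ∑ t ∈ Finset.Icc 1 T, α t * ((T : ℝ) - t + 1) / T =
        (η + 2 * L / n) * (α0 * ((T : ℝ) + 1) / 2) := by
  obtain ⟨j, -, hS⟩ := hdiff
  have hη : 0 ≤ η := ApproxLipschitzWith.nonneg (happrox (S j))
  have hDL (z : Z) (θ : E) : ‖D θ z‖ ≤ L := (hgrad z θ).norm_le_of_lipschitz hL (hLip z)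
  have hstep (i : Fin T → Fin n) (t : Fin T) :
      ‖θS i (t + 1) - θS' i (t + 1)‖ ≤
        ‖θS i t - θS' i t‖ + α (t + 1) * (η + if i t = j then 2 * L else 0) := by
    obtain ⟨hα₀, hα₁⟩ := hα (t + 1) (by omega) (by omega)
    rw [hstepS, hstepS']
    split_ifs with hij
    · nlinarith [norm_sub_smul_sub_sub_smul_le hα₀.le (hDL (S (i t)) (θS i t))
        (hDL (S' (i t)) (θS' i t)) (θS i t) (θS' i t)]
    · rw [← hS _ hij, add_zero]
      exact (hconv _).norm_sub_smul_sub_le (hgrad _) (happrox _) hβ hα₀.le hα₁ _ _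
  have hmean := expect_le_sum_Icc_of_le_add j (fun i t => ‖θS i t - θS' i t‖) α η (2 * L)
    (by simp [hinitS, hinitS']) hstep
  simp only [Fintype.card_fin] at hmean
  refine ⟨?_, fun α0 hα0 => by rw [sum_Icc_mul_sub_add_one_div_of_const hT hα0]⟩
  calc (1 / (n : ℝ) ^ T) * ∑ i : Fin T → Fin n, ‖θbarS i - θbarS' i‖
      = 𝔼 i, ‖θbarS i - θbarS' i‖ := by
        rw [Fintype.expect_eq_sum_div_card]; simp [div_eq_inv_mul]
    _ ≤ (T : ℝ)⁻¹ * ∑ t ∈ Icc 1 T, ∑ s ∈ Icc 1 t, (η + 2 * L / n) * α s := by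
        simpa only [hbarS, hbarS'] using
          expect_norm_swa_sub_le θS θS' _ fun t ht => hmean t (mem_Icc.mp ht).2
    _ = _ := by
        rw [sum_Icc_sum_Icc_eq_sum_mul, mul_sum, mul_sum]
        exact sum_congr rfl fun t _ => by ring

/-- Theorem 6.2 (stability of stochastic weight averaging): averaging the SGD
trajectory weights each step's stability contribution by (T - t + 1)/T; for a constant
step size the resulting bound is `(η + 2L/n)·α(T+1)/2`. -/
theorem swa_uniform_stability
    {E : Type*} [NormedAddCommGroup E] [InnerProductSpace ℝ E] [CompleteSpace E]
    {Z : Type*}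
    (h : E → Z → ℝ) (D : E → Z → E) (L β η : ℝ) (hL : 0 ≤ L) (hβ : 0 < β) (hη : 0 < η)
    (hconv : ∀ z : Z, ConvexOn ℝ Set.univ (fun θ => h θ z))
    (hLip : ∀ (z : Z) (θ1 θ2 : E), |h θ1 z - h θ2 z| ≤ L * ‖θ1 - θ2‖)
    (hgrad : ∀ (z : Z) (θ : E), HasGradientAt (fun θ' => h θ' z) (D θ z) θ)
    (happrox : ∀ (z : Z) (θ1 θ2 : E), ‖D θ1 z - D θ2 z‖ ≤ β * ‖θ1 - θ2‖ + η)
    (n T : ℕ) (hn : 0 < n) (hT : 0 < T)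
    (S S' : Fin n → Z)
    (hdiff : ∃ j : Fin n, S j ≠ S' j ∧ ∀ i : Fin n, i ≠ j → S i = S' i)
    (θ0 : E) (α : ℕ → ℝ)
    (hα : ∀ t : ℕ, 1 ≤ t → t ≤ T → 0 < α t ∧ α t ≤ 1 / β)
    (θS θS' : (Fin T → Fin n) → ℕ → E)
    (hinitS : ∀ i, θS i 0 = θ0) (hinitS' : ∀ i, θS' i 0 = θ0)
    (hstepS : ∀ (i : Fin T → Fin n) (t : Fin T),
      θS i (t.val + 1) = θS i t.val - α (t.val + 1) • D (θS i t.val) (S (i t)))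
    (hstepS' : ∀ (i : Fin T → Fin n) (t : Fin T),
      θS' i (t.val + 1) = θS' i t.val - α (t.val + 1) • D (θS' i t.val) (S' (i t)))
    -- the stochastic-weight-averaged iterates
    (θbarS θbarS' : (Fin T → Fin n) → E)
    (hbarS : ∀ i, θbarS i = (T : ℝ)⁻¹ • ∑ t ∈ Finset.Icc 1 T, θS i t)
    (hbarS' : ∀ i, θbarS' i = (T : ℝ)⁻¹ • ∑ t ∈ Finset.Icc 1 T, θS' i t) :
    (1 / (n : ℝ) ^ T) * ∑ i : Fin T → Fin n, ‖θbarS i - θbarS' i‖ ≤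
        (η + 2 * L / n) * ∑ t ∈ Finset.Icc 1 T, α t * ((T : ℝ) - t + 1) / T ∧
    ∀ α0 : ℝ, (∀ t : ℕ, 1 ≤ t → t ≤ T → α t = α0) →
      (η + 2 * L / n) * ∑ t ∈ Finset.Icc 1 T, α t * ((T : ℝ) - t + 1) / T =
        (η + 2 * L / n) * (α0 * ((T : ℝ) + 1) / 2) :=
  swa_uniform_stability_general h D L β η hL hβ hconv hLip hgrad happrox n T hT S S' hdiff θ0 α hα
    θS θS' hinitS hinitS' hstepS hstepS' θbarS θbarS' hbarS hbarS'
end
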